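/- arXiv:1602.08938 — 2 statements merged into one kernel-verified Lean document; each statement's English description precedes it below -/
import Mathlib

section
/- Let X_n be non-negative random variables converging in distribution to X, with 0 < E[X²] < ∞, E[X³] = ∞, E[X_n²] < ∞ for each n, and E[X_n²] → E[X²]. Let m_n ↑ ∞ be integers and X_{n,1},…,X_{n,m_n} i.i.d. copies of X_n, and set S_n = Σ_{j≤m_n} X_{n,j}³. Then m_n^{−3}·Σ_{{j,k}⊂[m_n]} X_{n,j}³ X_{n,k}³ = o_P(S_n). -/
/-!
If every `X_{n,j}` lies in `[0, t]` with `t = m_n^{4/7}`, then each `X_{n,j}³ · Σ_{k<j} X_{n,k}³`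
is at most `t³ S_n`, so
`m_n^{-3} · Σ_{k<j} X_{n,j}³ X_{n,k}³ ≤ m_n^{-2} t³ S_n = m_n^{-2/7} S_n ≤ ε S_n` for large `n`.
By the union bound and Chebyshev's inequality for the second moment, some `X_{n,j}`
exceeds `t` with probability at most `m_n E[X_n²] / t² = m_n^{-1/7} E[X_n²] → 0`.
-/

open MeasureTheory ProbabilityTheory Filter Finset
open scoped Topology BoundedContinuousFunction

theorem ProbabilityTheory.identDistrib_of_map_eq {Ω β : Type*} [MeasurableSpace Ω]
    [MeasurableSpace β] {μ : Measure Ω} [NeZero μ] {X Y : Ω → β} (hX : AEMeasurable X μ)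
    (h : μ.map Y = μ.map X) : IdentDistrib Y X μ μ where
  aemeasurable_fst := by
    by_contra hY
    rw [Measure.map_of_not_aemeasurable hY, eq_comm, Measure.map_eq_zero_iff hX] at h
    exact NeZero.ne μ h
  aemeasurable_snd := hX
  map_eq := h

theorem MeasureTheory.measure_ge_le_integral_sq_div {Ω : Type*} [MeasurableSpace Ω]
    {μ : Measure Ω} [IsFiniteMeasure μ] {X : Ω → ℝ} (hX : Integrable (fun ω => X ω ^ 2) μ)
    {t : ℝ} (ht : 0 < t) :
    μ {ω | t ≤ X ω} ≤ ENNReal.ofReal ((∫ ω, X ω ^ 2 ∂μ) / t ^ 2) := by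
  have markov := mul_meas_ge_le_integral_of_nonneg (ae_of_all _ fun ω => sq_nonneg (X ω)) hX (t ^ 2)
  calc μ {ω | t ≤ X ω} ≤ μ {ω | t ^ 2 ≤ X ω ^ 2} :=
        measure_mono (Set.ofPred_subset_ofPred.2 fun ω hω => pow_le_pow_left₀ ht.le hω 2)
    _ = ENNReal.ofReal (μ.real {ω | t ^ 2 ≤ X ω ^ 2}) := (ofReal_measureReal).symm
    _ ≤ _ := ENNReal.ofReal_le_ofReal ((le_div_iff₀' (by positivity)).2 markov)

theorem sum_range_sum_range_mul_le {m : ℕ} {a : ℕ → ℝ} {b : ℝ} (ha : ∀ j < m, 0 ≤ a j)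
    (hb : ∀ j < m, a j ≤ b) :
    ∑ j ∈ range m, ∑ k ∈ range j, a j * a k ≤ m * b * ∑ j ∈ range m, a j := by
  have partial_nonneg : ∀ j ≤ m, 0 ≤ ∑ k ∈ range j, a k := fun j hj =>
    sum_nonneg fun k hk => ha k ((mem_range.1 hk).trans_le hj)
  calc ∑ j ∈ range m, ∑ k ∈ range j, a j * a k
      ≤ ∑ _j ∈ range m, b * ∑ k ∈ range m, a k := by
        refine sum_le_sum fun j hj => ?_
        have hj := mem_range.1 hj
        rw [← mul_sum]
        exact mul_le_mul (hb j hj)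
          (sum_le_sum_of_subset_of_nonneg (range_subset_range.2 hj.le)
            fun k hk _ => ha k (mem_range.1 hk))
          (partial_nonneg j hj.le) ((ha j hj).trans (hb j hj))
    _ = m * b * ∑ j ∈ range m, a j := by simp [mul_assoc]

theorem sum_range_pairs_cube_div_le {m : ℕ} {z : ℕ → ℝ} {t ε : ℝ} (hε : 0 ≤ ε)
    (hz0 : ∀ j < m, 0 ≤ z j) (hzt : ∀ j < m, z j ≤ t) (ht : t ^ 3 ≤ ε * m ^ 2) :
    (∑ j ∈ range m, ∑ k ∈ range j, z j ^ 3 * z k ^ 3) / m ^ 3 ≤ ε * ∑ j ∈ range m, z j ^ 3 := by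
  have hS : 0 ≤ ∑ j ∈ range m, z j ^ 3 :=
    sum_nonneg fun j hj => pow_nonneg (hz0 j (mem_range.1 hj)) 3
  refine div_le_of_le_mul₀ (by positivity) (mul_nonneg hε hS) ?_
  calc ∑ j ∈ range m, ∑ k ∈ range j, z j ^ 3 * z k ^ 3
      ≤ m * t ^ 3 * ∑ j ∈ range m, z j ^ 3 :=
        sum_range_sum_range_mul_le (fun j hj => pow_nonneg (hz0 j hj) 3)
          fun j hj => pow_le_pow_left₀ (hz0 j hj) (hzt j hj) 3
    _ ≤ m * (ε * m ^ 2) * ∑ j ∈ range m, z j ^ 3 := by gcongr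
    _ = ε * (∑ j ∈ range m, z j ^ 3) * m ^ 3 := by ring

section PairSum

variable {Ω : Type*} [MeasurableSpace Ω] {μ : Measure Ω} [IsFiniteMeasure μ] {X : Ω → ℝ}
  {Z : ℕ → Ω → ℝ} {m : ℕ}

theorem measure_pairs_cube_gt_le (hX0 : ∀ᵐ ω ∂μ, 0 ≤ X ω)
    (hX2 : Integrable (fun ω => X ω ^ 2) μ) (hZ : ∀ j < m, IdentDistrib (Z j) X μ μ)
    {t ε : ℝ} (hε : 0 ≤ ε) (ht : 0 < t) (htε : t ^ 3 ≤ ε * m ^ 2) :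
    μ {ω | ε * (∑ j ∈ range m, Z j ω ^ 3) <
        (∑ j ∈ range m, ∑ k ∈ range j, Z j ω ^ 3 * Z k ω ^ 3) / (m : ℝ) ^ 3}
      ≤ m * ENNReal.ofReal ((∫ ω, X ω ^ 2 ∂μ) / t ^ 2) := by
  have hZ0 : ∀ᵐ ω ∂μ, ∀ j ∈ Set.Iio m, 0 ≤ Z j ω :=
    (eventually_all_finite (Set.finite_Iio m)).2 fun j hj =>
      (hZ j hj).symm.ae_snd (measurableSet_le measurable_const measurable_id) hX0
  calc _ ≤ μ (⋃ j ∈ range m, {ω | t ≤ Z j ω}) := by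
        refine measure_mono_ae (hZ0.mono fun ω hZ0ω hbad => ?_)
        by_contra hsmall
        have hZt : ∀ j < m, Z j ω ≤ t := fun j hj =>
          le_of_not_ge fun h => hsmall (Set.mem_iUnion₂_of_mem (mem_range.2 hj) h)
        exact (not_lt.2 (sum_range_pairs_cube_div_le hε hZ0ω hZt htε)) hbad
    _ ≤ ∑ j ∈ range m, μ {ω | t ≤ Z j ω} := measure_biUnion_finset_le _ _
    _ ≤ ∑ _j ∈ range m, ENNReal.ofReal ((∫ ω, X ω ^ 2 ∂μ) / t ^ 2) := by
        refine sum_le_sum fun j hj => ?_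
        change μ (Z j ⁻¹' Set.Ici t) ≤ _
        rw [(hZ j (mem_range.1 hj)).measure_mem_eq measurableSet_Ici]
        exact measure_ge_le_integral_sq_div hX2 ht
    _ = _ := by simp

theorem measure_pairs_cube_gt_le_rpow (hX0 : ∀ᵐ ω ∂μ, 0 ≤ X ω)
    (hX2 : Integrable (fun ω => X ω ^ 2) μ) (hZ : ∀ j < m, IdentDistrib (Z j) X μ μ)
    (hm : 1 ≤ m) {ε : ℝ} (hε : (m : ℝ) ^ (-(2 / 7 : ℝ)) ≤ ε) :
    μ {ω | ε * (∑ j ∈ range m, Z j ω ^ 3) <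
        (∑ j ∈ range m, ∑ k ∈ range j, Z j ω ^ 3 * Z k ω ^ 3) / (m : ℝ) ^ 3}
      ≤ ENNReal.ofReal ((m : ℝ) ^ (-(1 / 7 : ℝ)) * ∫ ω, X ω ^ 2 ∂μ) := by
  have hm0 : (0 : ℝ) < m := by exact_mod_cast hm
  have rpow_pow (a : ℝ) (k : ℕ) : ((m : ℝ) ^ a) ^ k = (m : ℝ) ^ (a * k) := by
    rw [← Real.rpow_natCast, ← Real.rpow_mul hm0.le]
  set t := (m : ℝ) ^ (4 / 7 : ℝ)
  have ht3 : t ^ 3 ≤ ε * m ^ 2 := by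
    have : t ^ 3 = (m : ℝ) ^ (-(2 / 7 : ℝ)) * m ^ 2 := by
      rw [rpow_pow, ← Real.rpow_natCast _ 2, ← Real.rpow_add hm0]
      norm_num
    rw [this]
    gcongr
  have ht2 : (m : ℝ) * (1 / t ^ 2) = (m : ℝ) ^ (-(1 / 7 : ℝ)) := by
    rw [rpow_pow, mul_one_div, show -(1 / 7 : ℝ) = 1 - 4 / 7 * (2 : ℕ) by norm_num,
      Real.rpow_sub hm0, Real.rpow_one]
  calc _ ≤ m * ENNReal.ofReal ((∫ ω, X ω ^ 2 ∂μ) / t ^ 2) :=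
        measure_pairs_cube_gt_le hX0 hX2 hZ ((Real.rpow_nonneg hm0.le _).trans hε)
          (by positivity) ht3
    _ = _ := by
        rw [← ENNReal.ofReal_natCast, ← ENNReal.ofReal_mul (Nat.cast_nonneg m), ← ht2]
        ring_nf

end PairSum

theorem stmt9_general {Ω : Type*} [MeasurableSpace Ω] (μ : Measure Ω) [IsProbabilityMeasure μ]
    (X : ℕ → Ω → ℝ) (Xlim : Ω → ℝ)
    (hXmeas : ∀ n, Measurable (X n))
    (hXnonneg : ∀ n ω, 0 ≤ X n ω)
    (hn2int : ∀ n, Integrable (fun ω => X n ω ^ 2) μ)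
    (h2conv : Tendsto (fun n => ∫ ω, X n ω ^ 2 ∂μ) atTop (𝓝 (∫ ω, Xlim ω ^ 2 ∂μ)))
    (m : ℕ → ℕ) (hmtop : Tendsto m atTop atTop)
    (Y : ℕ → ℕ → Ω → ℝ)
    (hYdist : ∀ n i, i < m n → μ.map (Y n i) = μ.map (X n)) :
    ∀ ε > (0 : ℝ), Tendsto (fun n : ℕ =>
      μ {ω | ε * (∑ j ∈ Finset.range (m n), Y n j ω ^ 3) <
        (∑ j ∈ Finset.range (m n), ∑ k ∈ Finset.range j, Y n j ω ^ 3 * Y n k ω ^ 3)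
          / (m n : ℝ) ^ 3}) atTop (𝓝 0) := by
  intro ε hε
  have hm : Tendsto (fun n => (m n : ℝ)) atTop atTop :=
    tendsto_natCast_atTop_atTop.comp hmtop
  have hbound : Tendsto (fun n => ENNReal.ofReal ((m n : ℝ) ^ (-(1 / 7 : ℝ)) * ∫ ω, X n ω ^ 2 ∂μ))
      atTop (𝓝 0) := by
    simpa using ENNReal.tendsto_ofReal
      (((tendsto_rpow_neg_atTop (by norm_num : (0 : ℝ) < 1 / 7)).comp hm).mul h2conv)
  refine tendsto_of_tendsto_of_tendsto_of_le_of_le' tendsto_const_nhds hbound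
    (Eventually.of_forall fun _ => zero_le) ?_
  filter_upwards [hmtop.eventually_ge_atTop 1,
    ((tendsto_rpow_neg_atTop (by norm_num : (0 : ℝ) < 2 / 7)).comp hm).eventually
      (gt_mem_nhds hε)] with n hn1 hn2
  exact measure_pairs_cube_gt_le_rpow (ae_of_all _ (hXnonneg n)) (hn2int n)
    (fun j hj => identDistrib_of_map_eq (hXmeas n).aemeasurable (hYdist n j hj)) hn1 hn2.le

theorem stmt9 {Ω : Type*} [MeasurableSpace Ω] (μ : Measure Ω) [IsProbabilityMeasure μ]
    (X : ℕ → Ω → ℝ) (Xlim : Ω → ℝ)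
    (hXmeas : ∀ n, Measurable (X n)) (hXlimMeas : Measurable Xlim)
    (hXnonneg : ∀ n ω, 0 ≤ X n ω) (hXlimNonneg : ∀ ω, 0 ≤ Xlim ω)
    (hconv : ∀ f : ℝ →ᵇ ℝ,
      Tendsto (fun n => ∫ ω, f (X n ω) ∂μ) atTop (𝓝 (∫ ω, f (Xlim ω) ∂μ)))
    (h2pos : 0 < ∫ ω, Xlim ω ^ 2 ∂μ)
    (h2int : Integrable (fun ω => Xlim ω ^ 2) μ)
    (h3inf : ∫⁻ ω, ENNReal.ofReal (Xlim ω ^ 3) ∂μ = ⊤)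
    (hn2int : ∀ n, Integrable (fun ω => X n ω ^ 2) μ)
    (h2conv : Tendsto (fun n => ∫ ω, X n ω ^ 2 ∂μ) atTop (𝓝 (∫ ω, Xlim ω ^ 2 ∂μ)))
    (m : ℕ → ℕ) (hmono : Monotone m) (hmtop : Tendsto m atTop atTop)
    (Y : ℕ → ℕ → Ω → ℝ)
    (hYindep : ∀ n, iIndepFun
      (fun i : Fin (m n) => Y n i) μ)
    (hYdist : ∀ n i, i < m n → μ.map (Y n i) = μ.map (X n)) :
    ∀ ε > (0 : ℝ), Tendsto (fun n : ℕ =>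
      μ {ω | ε * (∑ j ∈ Finset.range (m n), Y n j ω ^ 3) <
        (∑ j ∈ Finset.range (m n), ∑ k ∈ Finset.range j, Y n j ω ^ 3 * Y n k ω ^ 3)
          / (m n : ℝ) ^ 3}) atTop (𝓝 0) :=
  stmt9_general μ X Xlim hXmeas hXnonneg hn2int h2conv m hmtop Y hYdist
end

section
/- Let X_n be a sequence of non-negative random variables converging in distribution to X with E[X] = ∞, let X_{n,1},…,X_{n,m_n} be i.i.d. copies of X_n with m_n → ∞, and set T_n = X_{n,1} + ⋯ + X_{n,m_n}. Then m_n = o_P(T_n), i.e., m_n/T_n → 0 in probability. -/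
open MeasureTheory ProbabilityTheory Filter
open scoped Topology BoundedContinuousFunction NNReal ENNReal

/-!
Truncate at a level `A`: `min (max x 0) A` is a bounded continuous function, so convergence in
distribution carries `E[min(X⁺, A)]` to the limit, and by monotone convergence this limit exceeds
`2 / ε` once `A` is large, because `E[X] = ∞`. Then for large `n` the truncated row sum
`W = ∑ min(X_{n,i}⁺, A)` has mean above `2 m_n / ε` and variance at most `m_n A² / 4`, while on the
event `ε T_n < m_n` it is below `m_n / ε`. Chebyshev bounds that event by `ε² A² / (4 m_n) → 0`.
-/

noncomputable def clampBCF (A : ℝ≥0) : ℝ →ᵇ ℝ :=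
  BoundedContinuousFunction.ofNormedAddCommGroup (fun x => min (max x 0) A) (by fun_prop) A
    fun x => by
      rw [Real.norm_eq_abs, abs_le]
      exact ⟨by linarith [le_min (le_max_right x 0) A.coe_nonneg, A.coe_nonneg], min_le_right _ _⟩

lemma clampBCF_apply (A : ℝ≥0) (x : ℝ) : clampBCF A x = min (max x 0) A := rfl

lemma clampBCF_mem_Icc (A : ℝ≥0) (x : ℝ) : clampBCF A x ∈ Set.Icc 0 (A : ℝ) :=
  ⟨le_min (le_max_right x 0) A.coe_nonneg, min_le_right _ _⟩

lemma clampBCF_le_self (A : ℝ≥0) {x : ℝ} (hx : 0 ≤ x) : clampBCF A x ≤ x := by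
  rw [clampBCF_apply, max_eq_left hx]
  exact min_le_left _ _

lemma clampBCF_natCast_eventually_eq (x : ℝ) :
    ∀ᶠ A : ℕ in atTop, clampBCF A x = max x 0 := by
  filter_upwards [eventually_ge_atTop ⌈max x 0⌉₊] with A hA
  exact min_eq_left ((Nat.le_ceil _).trans (by exact_mod_cast hA))

section

variable {Ω : Type*} [MeasurableSpace Ω] {μ : Measure Ω}

lemma tendsto_integral_clampBCF_atTop [IsFiniteMeasure μ] {f : Ω → ℝ} (hf : Measurable f)
    (hmean : ∫⁻ ω, ENNReal.ofReal (f ω) ∂μ = ∞) :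
    Tendsto (fun A : ℕ => ∫ ω, clampBCF A (f ω) ∂μ) atTop atTop := by
  have hmeas : ∀ A : ℕ, Measurable fun ω => clampBCF A (f ω) := fun A =>
    (clampBCF A).continuous.measurable.comp hf
  have hlint :
      Tendsto (fun A : ℕ => ∫⁻ ω, ENNReal.ofReal (clampBCF A (f ω)) ∂μ) atTop (𝓝 ∞) := by
    rw [← hmean]
    refine lintegral_tendsto_of_tendsto_of_monotone
      (fun A => (hmeas A).ennreal_ofReal.aemeasurable)
      (ae_of_all _ fun ω A B hAB => ENNReal.ofReal_le_ofReal ?_) (ae_of_all _ fun ω => ?_)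
    · exact min_le_min_left _ (by exact_mod_cast hAB)
    · refine tendsto_const_nhds.congr' ?_
      filter_upwards [clampBCF_natCast_eventually_eq (f ω)] with A hA
      rw [hA, ENNReal.ofReal_max, ENNReal.ofReal_zero, max_eq_left zero_le]
  have hint : ∀ A : ℕ, ENNReal.ofReal (∫ ω, clampBCF A (f ω) ∂μ)
      = ∫⁻ ω, ENNReal.ofReal (clampBCF A (f ω)) ∂μ := fun A =>
    ofReal_integral_eq_lintegral_ofReal
      (.of_mem_Icc 0 A (hmeas A).aemeasurable (ae_of_all _ fun ω => clampBCF_mem_Icc A _))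
      (ae_of_all _ fun ω => (clampBCF_mem_Icc A _).1)
  refine tendsto_atTop.2 fun b => ?_
  filter_upwards [ENNReal.tendsto_nhds_top_iff_nnreal.1 hlint b.toNNReal] with A hA
  rw [← hint] at hA
  exact ((ENNReal.ofReal_lt_ofReal_iff'.1 hA).1).le

lemma measure_sum_le_sum_integral_sub_le [IsProbabilityMeasure μ] {ι : Type*} [Fintype ι]
    {Z : ι → Ω → ℝ} (hindep : iIndepFun Z μ) (hmeas : ∀ i, AEMeasurable (Z i) μ) {a b : ℝ}
    (hbdd : ∀ i, ∀ᵐ ω ∂μ, Z i ω ∈ Set.Icc a b) {t : ℝ} (ht : 0 < t) :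
    μ {ω | ∑ i, Z i ω ≤ ∑ i, μ[Z i] - t}
      ≤ ENNReal.ofReal (Fintype.card ι * ((b - a) / 2) ^ 2 / t ^ 2) := by
  have hL2 : ∀ i, MemLp (Z i) 2 μ := fun i =>
    memLp_of_bounded (hbdd i) (hmeas i).aestronglyMeasurable 2
  have hvar : variance (∑ i, Z i) μ ≤ Fintype.card ι * ((b - a) / 2) ^ 2 := by
    rw [IndepFun.variance_sum (fun i _ => hL2 i) fun i _ j _ hij => hindep.indepFun hij]
    calc ∑ i, variance (Z i) μ ≤ ∑ _i : ι, ((b - a) / 2) ^ 2 :=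
          Finset.sum_le_sum fun i _ => variance_le_sq_of_bounded (hbdd i) (hmeas i)
      _ = Fintype.card ι * ((b - a) / 2) ^ 2 := by simp
  have hmean : μ[∑ i, Z i] = ∑ i, μ[Z i] := by
    simp only [Finset.sum_apply]
    exact integral_finsetSum _ fun i _ => (hL2 i).integrable one_le_two
  calc μ {ω | ∑ i, Z i ω ≤ ∑ i, μ[Z i] - t}
      ≤ μ {ω | t ≤ |(∑ i, Z i) ω - μ[∑ i, Z i]|} := by
        refine measure_mono fun ω hω => ?_
        change t ≤ |(∑ i, Z i) ω - μ[∑ i, Z i]|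
        rw [hmean, Finset.sum_apply, abs_sub_comm]
        exact (le_sub_comm.1 hω).trans (le_abs_self _)
    _ ≤ ENNReal.ofReal (variance (∑ i, Z i) μ / t ^ 2) :=
        meas_ge_le_variance_div_sq (memLp_finsetSum' _ fun i _ => hL2 i) ht
    _ ≤ _ := by gcongr

lemma identDistrib_of_map_eq {α β : Type*} [MeasurableSpace α] [MeasurableSpace β]
    {ν : Measure α} [NeZero ν] {f g : α → β} (hf : AEMeasurable f ν) (h : ν.map f = ν.map g) :
    IdentDistrib f g ν ν where
  aemeasurable_fst := hf
  aemeasurable_snd := .of_map_ne_zero (h ▸ (Measure.map_ne_zero_iff hf).2 (NeZero.ne ν))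
  map_eq := h

lemma measure_mul_sum_lt_le [IsProbabilityMeasure μ] {M : ℕ} (hM : 0 < M) {Y : ℕ → Ω → ℝ}
    (hindep : iIndepFun (fun i : Fin M => Y i) μ) {X : Ω → ℝ} (hX : Measurable X)
    (hXnonneg : 0 ≤ᵐ[μ] X) (hdist : ∀ i < M, μ.map (Y i) = μ.map X) (A : ℝ≥0) {ε : ℝ}
    (hε : 0 < ε) (hmean : 2 / ε < ∫ ω, clampBCF A (X ω) ∂μ) :
    μ {ω | ε * ∑ i ∈ Finset.range M, Y i ω < M} ≤ ENNReal.ofReal (ε ^ 2 * A ^ 2 / (4 * M)) := by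
  have hid : ∀ i : Fin M, IdentDistrib X (Y i) μ μ := fun i =>
    identDistrib_of_map_eq hX.aemeasurable (hdist i i.2).symm
  set Z : Fin M → Ω → ℝ := fun i => clampBCF A ∘ Y i
  have hZmean : ∀ i, μ[Z i] = ∫ ω, clampBCF A (X ω) ∂μ := fun i =>
    ((hid i).comp (clampBCF A).continuous.measurable).integral_eq.symm
  have hM' : (0 : ℝ) < M := by exact_mod_cast hM
  have hsum_mean : 2 * M / ε < ∑ i, μ[Z i] := by
    simp only [hZmean, Finset.sum_const, Finset.card_univ, Fintype.card_fin, nsmul_eq_mul]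
    calc 2 * M / ε = M * (2 / ε) := by ring
      _ < _ := mul_lt_mul_of_pos_left hmean hM'
  have hYnonneg : ∀ᵐ ω ∂μ, ∀ i : Fin M, 0 ≤ Y i ω :=
    ae_all_iff.2 fun i => (hid i).ae_snd (p := (0 ≤ ·)) measurableSet_Ici hXnonneg
  calc μ {ω | ε * ∑ i ∈ Finset.range M, Y i ω < M}
      ≤ μ {ω | ∑ i, Z i ω ≤ ∑ i, μ[Z i] - M / ε} := by
        refine measure_mono_ae (hYnonneg.mono fun ω hω hlt => ?_)
        have hsumZ : ∑ i, Z i ω ≤ ∑ i ∈ Finset.range M, Y i ω := by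
          rw [← Fin.sum_univ_eq_sum_range (Y · ω)]
          exact Finset.sum_le_sum fun i _ => clampBCF_le_self A (hω i)
        have hsumY : ∑ i ∈ Finset.range M, Y i ω < M / ε := by
          rw [lt_div_iff₀ hε, mul_comm]
          exact hlt
        show ∑ i, Z i ω ≤ ∑ i, μ[Z i] - M / ε
        linarith [show 2 * M / ε = M / ε + M / ε by ring]
    _ ≤ ENNReal.ofReal (Fintype.card (Fin M) * ((A - 0) / 2) ^ 2 / (M / ε) ^ 2) :=
        measure_sum_le_sum_integral_sub_le
          (hindep.comp _ fun _ => (clampBCF A).continuous.measurable)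
          (fun i => (clampBCF A).continuous.measurable.comp_aemeasurable (hid i).aemeasurable_snd)
          (fun i => ae_of_all _ fun ω => clampBCF_mem_Icc A _) (div_pos hM' hε)
    _ = ENNReal.ofReal (ε ^ 2 * A ^ 2 / (4 * M)) := by
        rw [Fintype.card_fin]
        congr 1
        field_simp
        ring

end

theorem stmt12_general {Ω : Type*} [MeasurableSpace Ω] (μ : Measure Ω) [IsProbabilityMeasure μ]
    (X : ℕ → Ω → ℝ) (Xlim : Ω → ℝ)
    (hXmeas : ∀ n, Measurable (X n)) (hXlimMeas : Measurable Xlim)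
    (hXnonneg : ∀ n ω, 0 ≤ X n ω)
    (hconv : ∀ f : ℝ →ᵇ ℝ,
      Tendsto (fun n => ∫ ω, f (X n ω) ∂μ) atTop (𝓝 (∫ ω, f (Xlim ω) ∂μ)))
    (hmean : ∫⁻ ω, ENNReal.ofReal (Xlim ω) ∂μ = ⊤)
    (m : ℕ → ℕ) (hmtop : Tendsto m atTop atTop)
    (Y : ℕ → ℕ → Ω → ℝ)
    (hYindep : ∀ n, iIndepFun
      (fun i : Fin (m n) => Y n i) μ)
    (hYdist : ∀ n i, i < m n → μ.map (Y n i) = μ.map (X n)) :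
    ∀ ε > (0 : ℝ), Tendsto (fun n : ℕ =>
      μ {ω | ε * (∑ i ∈ Finset.range (m n), Y n i ω) < (m n : ℝ)}) atTop (𝓝 0) := by
  intro ε hε
  obtain ⟨A, hA⟩ : ∃ A : ℕ, 2 / ε < ∫ ω, clampBCF A (Xlim ω) ∂μ :=
    ((tendsto_integral_clampBCF_atTop hXlimMeas hmean).eventually_gt_atTop _).exists
  have hrow : ∀ᶠ n in atTop, μ {ω | ε * (∑ i ∈ Finset.range (m n), Y n i ω) < (m n : ℝ)}
      ≤ ENNReal.ofReal (ε ^ 2 * (A : ℝ≥0) ^ 2 / (4 * m n)) := by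
    filter_upwards [(hconv (clampBCF A)).eventually (eventually_gt_nhds hA),
      hmtop.eventually_gt_atTop 0] with n hn hm
    exact measure_mul_sum_lt_le hm (hYindep n) (hXmeas n) (ae_of_all _ (hXnonneg n)) (hYdist n)
      A hε hn
  have hbound :
      Tendsto (fun n => ENNReal.ofReal (ε ^ 2 * (A : ℝ≥0) ^ 2 / (4 * m n))) atTop (𝓝 0) := by
    rw [← ENNReal.ofReal_zero]
    refine ENNReal.tendsto_ofReal (tendsto_const_nhds.div_atTop ?_)
    exact (tendsto_natCast_atTop_atTop.comp hmtop).const_mul_atTop four_pos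
  exact tendsto_of_tendsto_of_tendsto_of_le_of_le' tendsto_const_nhds hbound
    (.of_forall fun _ => zero_le) hrow

theorem stmt12 {Ω : Type*} [MeasurableSpace Ω] (μ : Measure Ω) [IsProbabilityMeasure μ]
    (X : ℕ → Ω → ℝ) (Xlim : Ω → ℝ)
    (hXmeas : ∀ n, Measurable (X n)) (hXlimMeas : Measurable Xlim)
    (hXnonneg : ∀ n ω, 0 ≤ X n ω) (hXlimNonneg : ∀ ω, 0 ≤ Xlim ω)
    (hconv : ∀ f : ℝ →ᵇ ℝ,
      Tendsto (fun n => ∫ ω, f (X n ω) ∂μ) atTop (𝓝 (∫ ω, f (Xlim ω) ∂μ)))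
    (hmean : ∫⁻ ω, ENNReal.ofReal (Xlim ω) ∂μ = ⊤)
    (m : ℕ → ℕ) (hmtop : Tendsto m atTop atTop)
    (Y : ℕ → ℕ → Ω → ℝ)
    (hYindep : ∀ n, iIndepFun
      (fun i : Fin (m n) => Y n i) μ)
    (hYdist : ∀ n i, i < m n → μ.map (Y n i) = μ.map (X n)) :
    ∀ ε > (0 : ℝ), Tendsto (fun n : ℕ =>
      μ {ω | ε * (∑ i ∈ Finset.range (m n), Y n i ω) < (m n : ℝ)}) atTop (𝓝 0) :=
  stmt12_general μ X Xlim hXmeas hXlimMeas hXnonneg hconv hmean m hmtop Y hYindep hYdist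
end
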